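/- arXiv:2409.18599 — 11 statements merged into one kernel-verified Lean document; each statement's English description precedes it below -/
import Mathlib

section
/- Let (g,[·,·]_g) be a Leibniz algebra over a field K. Then the bracket on g ⊕ g defined by [(x',x),(y',y)] = ([x',y']_g, [x',y]_g + [x,y']_g − [x',y']_g) satisfies the left Leibniz identity, i.e. (g ⊕ g, [·,·]) is a Leibniz algebra. -/
/-- For a Leibniz algebra `(g,[·,·]_g)`, the bracket on `g ⊕ g` given by
`[(x',x),(y',y)] = ([x',y']_g, [x',y]_g + [x,y']_g − [x',y']_g)` satisfies the
left Leibniz identity. -/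
theorem reynolds_double_is_leibniz
    (K : Type*) [Field K] (g : Type*) [AddCommGroup g] [Module K g]
    (bg : g →ₗ[K] g →ₗ[K] g)
    (leib : ∀ x y z : g, bg x (bg y z) = bg (bg x y) z + bg y (bg x z))
    (B : g × g → g × g → g × g)
    (hB : ∀ p q : g × g, B p q = (bg p.1 q.1, bg p.1 q.2 + bg p.2 q.1 - bg p.1 q.1)) :
    ∀ p q s : g × g, B p (B q s) = B (B p q) s + B q (B p s) := by
  intro p q s
  simp only [hB, Prod.mk_add_mk, Prod.mk.injEq, map_add, map_sub, LinearMap.add_apply,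
    LinearMap.sub_apply]
  constructor
  · exact leib _ _ _
  · have h1 := leib p.1 q.1 s.2
    have h2 := leib p.1 q.2 s.1
    have h3 := leib p.2 q.1 s.1
    have h4 := leib p.1 q.1 s.1
    abel_nf
    rw [h1, h2, h3, h4]
    abel
end

section
/- Let g and h be K-vector spaces and G = g ⊕ h. For a multilinear map f : G^{p} → G, consider the following conditions: (Q) the g-component of f((0,u_1),…,(0,u_p)) vanishes for all u_1,…,u_p ∈ h; (R) the h-component of f((x_1,0),…,(x_p,0)) vanishes for all x_1,…,x_p ∈ g. Then: (i) if f : G^{m+1} → G and g' : G^{n+1} → G both satisfy (Q), so does ⟦f,g'⟧_B; (ii) if f and g' both satisfy (R), so does ⟦f,g'⟧_B; (iii) if f and g' both satisfy (Q) and (R), so does ⟦f,g'⟧_B. (Equivalently, the graded subspaces ⊕_n Q_n = ⊕_n (C^{n+1|−1} ⊕ C^{n|0} ⊕ ⋯ ⊕ C^{0|n}), ⊕_n R_n and ⊕_n M_n are graded Lie subalgebras of Balavoine's graded Lie algebra of G.) -/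
/-- `IsShuffle p σ` : the permutation `σ` of `Fin N` is a `(p, N-p)`-shuffle, i.e.
it is strictly increasing on the first `p` indices and on the remaining ones. -/
def IsShuffle {N : ℕ} (p : ℕ) (σ : Equiv.Perm (Fin N)) : Prop :=
  ∀ j k : Fin N, (j : ℕ) < (k : ℕ) →
    (((k : ℕ) < p → σ j < σ k) ∧ (p ≤ (j : ℕ) → σ j < σ k))

open Classical in
/-- The circle product `f ⋄ g` of an `(m+1)`-ary map `f` and an `(n+1)`-ary map
`g` on a module `W`:
`(f ⋄ g)(x_1,…,x_{m+n+1}) = Σ_{i=1}^{m+1} (−1)^{(i−1)n} Σ_{σ ∈ Sh(i−1,n)} sgn(σ)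
 f(x_{σ(1)},…,x_{σ(i−1)}, g(x_{σ(i)},…,x_{σ(i+n−1)}, x_{i+n}), x_{i+n+1},…)`. -/
noncomputable def diamond {W : Type*} [AddCommGroup W]
    (m n : ℕ) (f : (Fin (m + 1) → W) → W) (g : (Fin (n + 1) → W) → W) :
    (Fin (m + n + 1) → W) → W :=
  fun x =>
    ∑ i : Fin (m + 1), ∑ σ : Equiv.Perm (Fin ((i : ℕ) + n)),
      if IsShuffle (i : ℕ) σ then
        ((-1 : ℤ) ^ ((i : ℕ) * n) * (Equiv.Perm.sign σ : ℤ)) •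
          f (fun j : Fin (m + 1) =>
            if hj : (j : ℕ) < (i : ℕ) then
              x (Fin.castLE (by have := i.isLt; omega) (σ ⟨(j : ℕ), by omega⟩))
            else if (j : ℕ) = (i : ℕ) then
              g (fun k : Fin (n + 1) =>
                if hk : (k : ℕ) < n then
                  x (Fin.castLE (by have := i.isLt; omega) (σ ⟨(i : ℕ) + (k : ℕ), by omega⟩))
                else x ⟨(i : ℕ) + n, by have := i.isLt; omega⟩)
            else x ⟨(j : ℕ) + n, by have := j.isLt; omega⟩)
      else 0

/-- The Balavoine bracket `⟦f,g⟧_B = f ⋄ g − (−1)^{mn} g ⋄ f` of an `(m+1)`-ary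
map and an `(n+1)`-ary map. -/
noncomputable def bracketB {W : Type*} [AddCommGroup W]
    (m n : ℕ) (f : (Fin (m + 1) → W) → W) (g : (Fin (n + 1) → W) → W) :
    (Fin (m + n + 1) → W) → W :=
  fun x =>
    diamond m n f g x -
      ((-1 : ℤ) ^ (m * n)) •
        diamond n m g f (fun j : Fin (n + m + 1) => x (Fin.cast (by omega) j))

/-- A `p`-ary map `F : W^p → W` is multilinear over `K`. -/
def IsMultilinear (K : Type*) [Field K] {W : Type*} [AddCommGroup W] [Module K W]
    (p : ℕ) (F : (Fin p → W) → W) : Prop :=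
  (∀ (x : Fin p → W) (i : Fin p) (a b : W),
      F (Function.update x i (a + b))
        = F (Function.update x i a) + F (Function.update x i b)) ∧
  (∀ (x : Fin p → W) (i : Fin p) (c : K) (a : W),
      F (Function.update x i (c • a)) = c • F (Function.update x i a))

/-- Condition (Q): the `g`-component of `F((0,u_1),…,(0,u_p))` vanishes. -/
def CondQ {g h : Type*} [Zero g] [Zero h] (p : ℕ)
    (F : (Fin p → g × h) → g × h) : Prop :=
  ∀ u : Fin p → h, (F fun i => ((0 : g), u i)).1 = 0

/-- Condition (R): the `h`-component of `F((x_1,0),…,(x_p,0))` vanishes. -/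
def CondR {g h : Type*} [Zero g] [Zero h] (p : ℕ)
    (F : (Fin p → g × h) → g × h) : Prop :=
  ∀ x : Fin p → g, (F fun i => (x i, (0 : h))).2 = 0

section Aux
variable {g h : Type*} [AddCommGroup g] [AddCommGroup h]

lemma condQ_apply {p : ℕ} {F : (Fin p → g × h) → g × h} (hF : CondQ p F)
    (y : Fin p → g × h) (hy : ∀ i, (y i).1 = 0) : (F y).1 = 0 := by
  have : y = fun i => ((0 : g), (y i).2) := funext fun i => by
    ext
    · exact hy i
    · rfl
  rw [this]; exact hF _

lemma condR_apply {p : ℕ} {F : (Fin p → g × h) → g × h} (hF : CondR p F)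
    (y : Fin p → g × h) (hy : ∀ i, (y i).2 = 0) : (F y).2 = 0 := by
  have : y = fun i => ((y i).1, (0 : h)) := funext fun i => by
    ext
    · rfl
    · exact hy i
  rw [this]; exact hF _

lemma diamond_fst {m n : ℕ} {f : (Fin (m + 1) → g × h) → g × h}
    {g' : (Fin (n + 1) → g × h) → g × h}
    (hf : CondQ (m + 1) f) (hg : CondQ (n + 1) g')
    (x : Fin (m + n + 1) → g × h) (hx : ∀ i, (x i).1 = 0) :
    (diamond m n f g' x).1 = 0 := by
  unfold diamond
  rw [Prod.fst_sum]
  refine Finset.sum_eq_zero fun i _ => ?_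
  rw [Prod.fst_sum]
  refine Finset.sum_eq_zero fun σ _ => ?_
  split_ifs with hσ
  · rw [Prod.smul_fst]
    rw [condQ_apply hf]
    · simp
    · intro j
      split_ifs with h1 h2
      · exact hx _
      · exact condQ_apply hg _ fun k => by
          split_ifs
          · exact hx _
          · exact hx _
      · exact hx _
  · rfl

lemma diamond_snd {m n : ℕ} {f : (Fin (m + 1) → g × h) → g × h}
    {g' : (Fin (n + 1) → g × h) → g × h}
    (hf : CondR (m + 1) f) (hg : CondR (n + 1) g')
    (x : Fin (m + n + 1) → g × h) (hx : ∀ i, (x i).2 = 0) :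
    (diamond m n f g' x).2 = 0 := by
  unfold diamond
  rw [Prod.snd_sum]
  refine Finset.sum_eq_zero fun i _ => ?_
  rw [Prod.snd_sum]
  refine Finset.sum_eq_zero fun σ _ => ?_
  split_ifs with hσ
  · rw [Prod.smul_snd]
    rw [condR_apply hf]
    · simp
    · intro j
      split_ifs with h1 h2
      · exact hx _
      · exact condR_apply hg _ fun k => by
          split_ifs
          · exact hx _
          · exact hx _
      · exact hx _
  · rfl

lemma bracketB_condQ {m n : ℕ} {f : (Fin (m + 1) → g × h) → g × h}
    {g' : (Fin (n + 1) → g × h) → g × h}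
    (hf : CondQ (m + 1) f) (hg : CondQ (n + 1) g') :
    CondQ (m + n + 1) (bracketB m n f g') := by
  intro u
  unfold bracketB
  rw [Prod.fst_sub, Prod.smul_fst]
  rw [diamond_fst hf hg _ (fun i => rfl)]
  have := diamond_fst hg hf
    (fun j : Fin (n + m + 1) => ((0 : g), u (Fin.cast (by omega) j))) (fun i => rfl)
  rw [this]
  simp

lemma bracketB_condR {m n : ℕ} {f : (Fin (m + 1) → g × h) → g × h}
    {g' : (Fin (n + 1) → g × h) → g × h}
    (hf : CondR (m + 1) f) (hg : CondR (n + 1) g') :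
    CondR (m + n + 1) (bracketB m n f g') := by
  intro u
  unfold bracketB
  rw [Prod.snd_sub, Prod.smul_snd]
  rw [diamond_snd hf hg _ (fun i => rfl)]
  have := diamond_snd hg hf
    (fun j : Fin (n + m + 1) => (u (Fin.cast (by omega) j), (0 : h))) (fun i => rfl)
  rw [this]
  simp

end Aux

/-- The conditions (Q) and (R) on multilinear maps `G^p → G` (for `G = g ⊕ h`)
are preserved by the Balavoine bracket; equivalently, the graded subspaces
`⊕ₙ Qₙ`, `⊕ₙ Rₙ` and `⊕ₙ Mₙ` are graded Lie subalgebras of Balavoine's graded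
Lie algebra of `G`. -/
theorem bracketB_preserves_condQ_condR
    (K : Type*) [Field K] (g h : Type*)
    [AddCommGroup g] [Module K g] [AddCommGroup h] [Module K h]
    (m n : ℕ)
    (f : (Fin (m + 1) → g × h) → g × h) (g' : (Fin (n + 1) → g × h) → g × h)
    (hfm : IsMultilinear K (m + 1) f) (hgm : IsMultilinear K (n + 1) g') :
    (CondQ (m + 1) f → CondQ (n + 1) g' → CondQ (m + n + 1) (bracketB m n f g')) ∧
    (CondR (m + 1) f → CondR (n + 1) g' → CondR (m + n + 1) (bracketB m n f g')) ∧
    ((CondQ (m + 1) f ∧ CondR (m + 1) f) → (CondQ (n + 1) g' ∧ CondR (n + 1) g') →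
      (CondQ (m + n + 1) (bracketB m n f g') ∧ CondR (m + n + 1) (bracketB m n f g'))) := by
  exact ⟨fun hQf hQg => bracketB_condQ hQf hQg,
    fun hRf hRg => bracketB_condR hRf hRg,
    fun hf' hg' => ⟨bracketB_condQ hf'.1 hg'.1, bracketB_condR hf'.2 hg'.2⟩⟩
end

section
/- Let (G = g ⊕ h, [·,·]_G) be a proto-twilled Leibniz algebra over a field K with component maps [·,·]_g, θ, [·,·]_h, η, ψR, ρL, ψL, ρR, and let r : h → g be a deformation map. Then the bilinear bracket on h defined by [u,v]_r = [u,v]_h + ρL(r(u),v) + ρR(u,r(v)) + θ(r(u),r(v)) satisfies the left Leibniz identity, i.e. (h, [·,·]_r) is a Leibniz algebra. -/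
/-- If `r : h → g` is a deformation map in a proto-twilled Leibniz algebra
`(G = g ⊕ h, [·,·]_G)`, the bracket
`[u,v]_r = [u,v]_h + ρL(r(u),v) + ρR(u,r(v)) + θ(r(u),r(v))` makes `h` into a
Leibniz algebra. -/
theorem deformation_map_induced_leibniz
    (K : Type*) [Field K] (g h : Type*)
    [AddCommGroup g] [Module K g] [AddCommGroup h] [Module K h]
    (bg : g →ₗ[K] g →ₗ[K] g) (θ : g →ₗ[K] g →ₗ[K] h)
    (bh : h →ₗ[K] h →ₗ[K] h) (η : h →ₗ[K] h →ₗ[K] g)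
    (ψR : g →ₗ[K] h →ₗ[K] g) (ρL : g →ₗ[K] h →ₗ[K] h)
    (ψL : h →ₗ[K] g →ₗ[K] g) (ρR : h →ₗ[K] g →ₗ[K] h)
    (BG : g × h → g × h → g × h)
    (hBG : ∀ (x y : g) (u v : h),
      BG (x, u) (y, v) = (bg x y + ψR x v + ψL u y + η u v,
                          bh u v + ρL x v + ρR u y + θ x y))
    (leibG : ∀ a b c : g × h, BG a (BG b c) = BG (BG a b) c + BG b (BG a c))
    (r : h →ₗ[K] g)
    (hr : ∀ u v : h,
      bg (r u) (r v) + ψR (r u) v + ψL u (r v) + η u v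
        = r (bh u v + ρL (r u) v + ρR u (r v) + θ (r u) (r v)))
    (br : h → h → h)
    (hbr : ∀ u v : h, br u v = bh u v + ρL (r u) v + ρR u (r v) + θ (r u) (r v)) :
    ∀ u v w : h, br u (br v w) = br (br u v) w + br v (br u w) := by
  have key : ∀ u v : h, BG (r u, u) (r v, v) = (r (br u v), br u v) := by
    intro u v
    rw [hBG, hbr u v, hr u v]
  intro u v w
  have := leibG (r u, u) (r v, v) (r w, w)
  rw [key, key, key, key, key, key] at this
  have h2 := congrArg Prod.snd this
  simpa using h2
end

section
/- Let (G = g ⊕ h, [·,·]_G) be a proto-twilled Leibniz algebra over a field K with component maps [·,·]_g, θ, [·,·]_h, η, ψR, ρL, ψL, ρR, and let r : h → g be a deformation map. Define a bilinear bracket [·,·]_r on G = g ⊕ h by: [(x,0),(y,0)]_r = ([x,y]_g − r(θ(x,y)), θ(x,y)); [(0,u),(0,v)]_r = (0, [u,v]_h + ρL(r(u),v) + ρR(u,r(v)) + θ(r(u),r(v))); [(x,0),(0,u)]_r = (ψR(x,u) + [x,r(u)]_g − r(ρL(x,u) + θ(x,r(u))), ρL(x,u) + θ(x,r(u))); [(0,u),(x,0)]_r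 = (ψL(u,x) + [r(u),x]_g − r(ρR(u,x) + θ(r(u),x)), ρR(u,x) + θ(r(u),x)). Then [·,·]_r satisfies the left Leibniz identity on G, and 0 ⊕ h is a subalgebra; hence (G = g ⊕ h, [·,·]_r) is a quasi-twilled Leibniz algebra. -/
/-- If `r : h → g` is a deformation map in a proto-twilled Leibniz algebra
`(G = g ⊕ h, [·,·]_G)`, then the bilinear bracket `[·,·]_r` on `G` determined by
the four displayed formulas on pure pairs satisfies the left Leibniz identity,
and `0 ⊕ h` is a subalgebra; hence `(G = g ⊕ h, [·,·]_r)` is a quasi-twilled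
Leibniz algebra. -/
theorem deformation_map_quasi_twilled
    (K : Type*) [Field K] (g h : Type*)
    [AddCommGroup g] [Module K g] [AddCommGroup h] [Module K h]
    (bg : g →ₗ[K] g →ₗ[K] g) (θ : g →ₗ[K] g →ₗ[K] h)
    (bh : h →ₗ[K] h →ₗ[K] h) (η : h →ₗ[K] h →ₗ[K] g)
    (ψR : g →ₗ[K] h →ₗ[K] g) (ρL : g →ₗ[K] h →ₗ[K] h)
    (ψL : h →ₗ[K] g →ₗ[K] g) (ρR : h →ₗ[K] g →ₗ[K] h)
    (BG : g × h → g × h → g × h)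
    (hBG : ∀ (x y : g) (u v : h),
      BG (x, u) (y, v) = (bg x y + ψR x v + ψL u y + η u v,
                          bh u v + ρL x v + ρR u y + θ x y))
    (leibG : ∀ a b c : g × h, BG a (BG b c) = BG (BG a b) c + BG b (BG a c))
    (r : h →ₗ[K] g)
    (hr : ∀ u v : h,
      bg (r u) (r v) + ψR (r u) v + ψL u (r v) + η u v
        = r (bh u v + ρL (r u) v + ρR u (r v) + θ (r u) (r v)))
    (Br : (g × h) →ₗ[K] (g × h) →ₗ[K] (g × h))
    (hBr1 : ∀ x y : g,
      Br (x, 0) (y, 0) = (bg x y - r (θ x y), θ x y))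
    (hBr2 : ∀ u v : h,
      Br (0, u) (0, v) = (0, bh u v + ρL (r u) v + ρR u (r v) + θ (r u) (r v)))
    (hBr3 : ∀ (x : g) (u : h),
      Br (x, 0) (0, u) = (ψR x u + bg x (r u) - r (ρL x u + θ x (r u)),
                          ρL x u + θ x (r u)))
    (hBr4 : ∀ (u : h) (x : g),
      Br (0, u) (x, 0) = (ψL u x + bg (r u) x - r (ρR u x + θ (r u) x),
                          ρR u x + θ (r u) x)) :
    (∀ a b c : g × h, Br a (Br b c) = Br (Br a b) c + Br b (Br a c)) ∧
    (∀ u v : h, (Br (0, u) (0, v)).1 = 0) := by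

  classical
  set T : g × h → g × h := fun p => (p.1 + r p.2, p.2) with hT
  have Tinj : Function.Injective T := by
    intro p q hpq
    simp only [hT, Prod.mk.injEq] at hpq
    obtain ⟨h1, h2⟩ := hpq
    rw [h2] at h1
    exact Prod.ext (add_right_cancel h1) h2
  have Tadd : ∀ p q : g × h, T (p + q) = T p + T q := by
    intro p q
    simp only [hT, Prod.fst_add, Prod.snd_add, map_add, Prod.mk_add_mk]
    simp only [Prod.mk.injEq]
    exact ⟨by abel, trivial⟩
  have hsplit : ∀ p : g × h, p = ((p.1, 0) : g × h) + (0, p.2) := by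
    intro p; ext <;> simp
  have hBrsplit : ∀ a b : g × h,
      Br a b = Br (a.1, 0) (b.1, 0) + Br (a.1, 0) (0, b.2)
        + Br (0, a.2) (b.1, 0) + Br (0, a.2) (0, b.2) := by
    intro a b
    conv_lhs => rw [hsplit a, hsplit b]
    simp only [map_add, LinearMap.add_apply]
    abel
  have key : ∀ a b : g × h, T (Br a b) = BG (T a) (T b) := by
    intro a b
    rw [hBrsplit a b, Tadd, Tadd, Tadd]
    rw [hBr1, hBr2, hBr3, hBr4]
    show ((_ : g), (_ : h)) + _ + _ + _ = _
    simp only [hT]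
    rw [hBG]
    rw [← hr a.2 b.2]
    ext
    · simp only [Prod.fst_add, Prod.mk_add_mk, map_add, map_sub,
        LinearMap.add_apply, LinearMap.sub_apply]
      abel
    · simp only [Prod.snd_add, Prod.mk_add_mk, map_add,
        LinearMap.add_apply]
      abel
  constructor
  · intro a b c
    apply Tinj
    rw [Tadd, key, key, key, key, key, key, leibG]
  · intro u v
    rw [hBr2]
end

section
/- Let (G = g ⊕ h, [·,·]_G) be a proto-twilled Leibniz algebra over a field K with component maps [·,·]_g, θ, [·,·]_h, η, ψR, ρL, ψL, ρR, and let r : h → g be a deformation map. Then (g, ψL_r, ψR_r) is a representation of the Leibniz algebra (h, [·,·]_r), i.e. for all u,v ∈ h and x ∈ g: ψL_r(u, ψL_r(v,x)) = ψL_r([u,v]_r, x) + ψL_r(v, ψL_r(u,x)); ψL_r(u, ψR_r(x,v)) = ψR_r(ψL_r(u,x), v) + ψR_r(x, [u,v]_r); and ψR_r(x, [u,v]_r) = ψR_r(ψR_r(x,u), v) + ψL_r(u, ψR_r(x,v)). -/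
/-- If `r : h → g` is a deformation map in a proto-twilled Leibniz algebra
`(G = g ⊕ h, [·,·]_G)`, then `(g, ψL_r, ψR_r)` is a representation of the
induced Leibniz algebra `(h, [·,·]_r)`. -/
theorem deformation_map_induced_representation
    (K : Type*) [Field K] (g h : Type*)
    [AddCommGroup g] [Module K g] [AddCommGroup h] [Module K h]
    (bg : g →ₗ[K] g →ₗ[K] g) (θ : g →ₗ[K] g →ₗ[K] h)
    (bh : h →ₗ[K] h →ₗ[K] h) (η : h →ₗ[K] h →ₗ[K] g)
    (ψR : g →ₗ[K] h →ₗ[K] g) (ρL : g →ₗ[K] h →ₗ[K] h)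
    (ψL : h →ₗ[K] g →ₗ[K] g) (ρR : h →ₗ[K] g →ₗ[K] h)
    (BG : g × h → g × h → g × h)
    (hBG : ∀ (x y : g) (u v : h),
      BG (x, u) (y, v) = (bg x y + ψR x v + ψL u y + η u v,
                          bh u v + ρL x v + ρR u y + θ x y))
    (leibG : ∀ a b c : g × h, BG a (BG b c) = BG (BG a b) c + BG b (BG a c))
    (r : h →ₗ[K] g)
    (hr : ∀ u v : h,
      bg (r u) (r v) + ψR (r u) v + ψL u (r v) + η u v
        = r (bh u v + ρL (r u) v + ρR u (r v) + θ (r u) (r v)))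
    (br : h → h → h)
    (hbr : ∀ u v : h, br u v = bh u v + ρL (r u) v + ρR u (r v) + θ (r u) (r v))
    (ψLr : h → g → g)
    (hψLr : ∀ (u : h) (x : g),
      ψLr u x = ψL u x + bg (r u) x - r (ρR u x + θ (r u) x))
    (ψRr : g → h → g)
    (hψRr : ∀ (x : g) (u : h),
      ψRr x u = ψR x u + bg x (r u) - r (ρL x u + θ x (r u))) :
    (∀ (u v : h) (x : g), ψLr u (ψLr v x) = ψLr (br u v) x + ψLr v (ψLr u x)) ∧
    (∀ (u v : h) (x : g), ψLr u (ψRr x v) = ψRr (ψLr u x) v + ψRr x (br u v)) ∧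
    (∀ (u v : h) (x : g), ψRr x (br u v) = ψRr (ψRr x u) v + ψLr u (ψRr x v)) := by
  have addR : ∀ a b c : g × h, BG a (b + c) = BG a b + BG a c := by
    rintro ⟨a1, a2⟩ ⟨b1, b2⟩ ⟨c1, c2⟩
    simp only [Prod.mk_add_mk, hBG, map_add, LinearMap.add_apply, Prod.mk.injEq]
    constructor <;> abel
  have addL : ∀ a b c : g × h, BG (a + b) c = BG a c + BG b c := by
    rintro ⟨a1, a2⟩ ⟨b1, b2⟩ ⟨c1, c2⟩
    simp only [Prod.mk_add_mk, hBG, map_add, LinearMap.add_apply, Prod.mk.injEq]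
    constructor <;> abel
  have HφL : ∀ (u : h) (x : g), BG (r u, u) (x, 0)
      = (ψLr u x, 0) + (r (ρR u x + θ (r u) x), ρR u x + θ (r u) x) := by
    intro u x
    rw [hBG]
    simp only [Prod.mk_add_mk, map_zero, add_zero, zero_add, LinearMap.zero_apply,
      Prod.mk.injEq, hψLr, map_add]
    exact ⟨by abel, trivial⟩
  have HφR : ∀ (x : g) (u : h), BG (x, 0) (r u, u)
      = (ψRr x u, 0) + (r (ρL x u + θ x (r u)), ρL x u + θ x (r u)) := by
    intro x u
    rw [hBG]
    simp only [Prod.mk_add_mk, map_zero, add_zero, zero_add, LinearMap.zero_apply,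
      Prod.mk.injEq, hψRr, map_add]
    exact ⟨by abel, trivial⟩
  have Hφφ : ∀ (u v : h), BG (r u, u) (r v, v) = (r (br u v), br u v) := by
    intro u v
    rw [hBG, Prod.mk.injEq]
    constructor
    · rw [hbr]; exact hr u v
    · exact (hbr u v).symm
  refine ⟨?_, ?_, ?_⟩
  · intro u v x
    have E := leibG (r u, u) (r v, v) (x, 0)
    simp only [Hφφ, HφL, addR, addL] at E
    have E' := congrArg (fun p : g × h => p.1 - r p.2) E
    simp only [Prod.fst_add, Prod.snd_add, map_add, map_zero] at E'
    linear_combination (norm := abel) E'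
  · intro u v x
    have E := leibG (r u, u) (x, 0) (r v, v)
    simp only [Hφφ, HφL, HφR, addR, addL] at E
    have E' := congrArg (fun p : g × h => p.1 - r p.2) E
    simp only [Prod.fst_add, Prod.snd_add, map_add, map_zero] at E'
    linear_combination (norm := abel) E'
  · intro u v x
    have E := leibG (x, 0) (r u, u) (r v, v)
    simp only [Hφφ, HφL, HφR, addR, addL] at E
    have E' := congrArg (fun p : g × h => p.1 - r p.2) E
    simp only [Prod.fst_add, Prod.snd_add, map_add, map_zero] at E'
    linear_combination (norm := abel) E'
end

section
/- Let (G = g ⊕ h, [·,·]_G) be a proto-twilled Leibniz algebra over a field K with component maps [·,·]_g, θ, [·,·]_h, η, ψR, ρL, ψL, ρR, let r : h → g be a deformation map, and let δ_r denote the coboundary operator of the deformation map r. Then δ_r ∘ δ_r = 0; that is, for every n ≥ 1, every multilinear map f : h^n → g and all u_1,…,u_{n+2} ∈ h, (δ_r(δ_r f))(u_1,…,u_{n+2}) = 0. -/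
/-- The Loday–Pirashvili-type coboundary operator associated to left action
`ψLr : h × g → g`, right action `ψRr : g × h → g` and bracket `br : h × h → h`:
it sends an `n`-cochain `f : h^n → g` to the `(n+1)`-cochain given by
`(δf)(u_1,…,u_{n+1}) = Σ_{i=1}^{n} (−1)^{i+1} ψLr(u_i, f(u_1,…,û_i,…,u_{n+1}))
 + (−1)^{n+1} ψRr(f(u_1,…,u_n), u_{n+1})
 + Σ_{1≤i<j≤n+1} (−1)^i f(u_1,…,û_i,…,u_{j−1}, br(u_i,u_j), u_{j+1},…,u_{n+1})`. -/
noncomputable def deltaR {g h : Type*} [AddCommGroup g]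
    (ψLr : h → g → g) (ψRr : g → h → g) (br : h → h → h)
    (n : ℕ) (f : (Fin n → h) → g) : (Fin (n + 1) → h) → g :=
  fun u =>
    (∑ i : Fin n,
        ((-1 : ℤ) ^ (i : ℕ)) • ψLr (u i.castSucc) (f (u ∘ (i.castSucc).succAbove)))
    + ((-1 : ℤ) ^ (n + 1)) • ψRr (f fun i : Fin n => u i.castSucc) (u (Fin.last n))
    + ∑ i : Fin (n + 1), ∑ j : Fin (n + 1),
        if hij : (i : ℕ) < (j : ℕ) then
          ((-1 : ℤ) ^ ((i : ℕ) + 1)) •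
            f (Function.update (u ∘ i.succAbove)
                ⟨(j : ℕ) - 1, by have := j.isLt; omega⟩ (br (u i) (u j)))
        else 0

section FinHelpers

variable {α : Type*}

lemma snoc_comp_succAbove {m : ℕ} (w : Fin (m+1) → α) (v : α) (i : Fin (m+1)) :
    (Fin.snoc w v : Fin (m+2) → α) ∘ (Fin.succAbove i.castSucc) = Fin.snoc (w ∘ i.succAbove) v := by
  funext k
  refine Fin.lastCases ?_ (fun k' => ?_) k
  · rw [Function.comp_apply,
      Fin.succAbove_of_le_castSucc _ _
        (by rw [Fin.castSucc_le_castSucc_iff]; exact i.le_last), Fin.succ_last]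
    simp
  · simp [Function.comp, Fin.castSucc_succAbove_castSucc]

lemma update_snoc_last {m : ℕ} (a : Fin m → α) (v x : α) :
    Function.update (Fin.snoc a v : Fin (m+1) → α) (Fin.last m) x = Fin.snoc a x := by
  funext k
  refine Fin.lastCases ?_ (fun k' => ?_) k
  · simp
  · rw [Function.update_of_ne (by simp [Fin.ext_iff]; omega)]
    simp

lemma snoc_comp_castSucc' {m : ℕ} (w : Fin (m+1) → α) (v : α) :
    (Fin.snoc w v : Fin (m+2) → α) ∘ Fin.castSucc = w := by
  funext k; simp

lemma update_snoc_mk_last {m : ℕ} (a : Fin m → α) (v x : α) (k : ℕ) (hk : k < m+1)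
    (hkm : k = m) :
    Function.update (Fin.snoc a v : Fin (m+1) → α) ⟨k, hk⟩ x = Fin.snoc a x := by
  subst hkm; exact update_snoc_last a v x

lemma update_snoc_mk_castSucc {m : ℕ} (a : Fin m → α) (v x : α) (k : ℕ) (hk : k < m+1)
    (hkm : k < m) :
    Function.update (Fin.snoc a v : Fin (m+1) → α) ⟨k, hk⟩ x
      = Fin.snoc (Function.update a ⟨k, hkm⟩ x) v := by
  have h1 : (⟨k, hk⟩ : Fin (m+1)) = (⟨k, hkm⟩ : Fin m).castSucc := rfl
  rw [h1, ← Fin.snoc_update]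

lemma sum_split_aux {M : Type*} [AddCommMonoid M] (m : ℕ) (F : Fin (m+2) → Fin (m+2) → M) :
    (∑ i : Fin (m+2), ∑ j : Fin (m+2), F i j)
      = (∑ i : Fin (m+1), ∑ j : Fin (m+1), F i.castSucc j.castSucc)
        + ((∑ j : Fin (m+1), F (Fin.last (m+1)) j.castSucc)
        + ((∑ i : Fin (m+1), F i.castSucc (Fin.last (m+1)))
            + F (Fin.last (m+1)) (Fin.last (m+1)))) := by
  calc (∑ i : Fin (m+2), ∑ j : Fin (m+2), F i j)
      = ∑ i : Fin (m+2), ((∑ j : Fin (m+1), F i j.castSucc) + F i (Fin.last (m+1))) :=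
        Finset.sum_congr rfl fun i _ => Fin.sum_univ_castSucc _
    _ = (∑ i : Fin (m+2), ∑ j : Fin (m+1), F i j.castSucc)
        + ∑ i : Fin (m+2), F i (Fin.last (m+1)) := Finset.sum_add_distrib
    _ = _ := by
        rw [Fin.sum_univ_castSucc (f := fun i : Fin (m+2) => ∑ j : Fin (m+1), F i j.castSucc),
          Fin.sum_univ_castSucc (f := fun i : Fin (m+2) => F i (Fin.last (m+1)))]
        abel

lemma snoc_init' {m : ℕ} (w : Fin (m+1) → α) :
    Fin.snoc (w ∘ Fin.castSucc) (w (Fin.last m)) = w := by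
  have : w ∘ Fin.castSucc = Fin.init w := rfl
  rw [this, Fin.snoc_init_self]

end FinHelpers

section Generic

universe uh uv

variable {h : Type uh} {M : Type*} [AddCommGroup h] [AddCommGroup M]

/-- The induced left action on bundled curried cochains. -/
def Lp (l : h → M → M) (br : h → h → h)
    (hlM : ∀ u x y, l u (x + y) = l u x + l u y)
    (hbr2 : ∀ u x y, br u (x + y) = br u x + br u y)
    (u : h) (φ : h →+ M) : h →+ M :=
  AddMonoidHom.mk' (fun v => l u (φ v) - φ (br u v)) (by
    intro a b; rw [hbr2, map_add φ (br u a) (br u b), map_add φ a b, hlM]; abel)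

/-- The induced right action on bundled curried cochains. -/
def Rp (l : h → M → M) (r : M → h → M) (br : h → h → h)
    (hlM : ∀ u x y, l u (x + y) = l u x + l u y)
    (hrH : ∀ x u u', r x (u + u') = r x u + r x u')
    (hbr2 : ∀ u x y, br u (x + y) = br u x + br u y)
    (φ : h →+ M) (u : h) : h →+ M :=
  AddMonoidHom.mk' (fun v => φ (br u v) - l u (φ v) - r (φ u) v) (by
    intro a b; rw [hbr2, map_add φ (br u a) (br u b), map_add φ a b, hlM, hrH]; abel)

/-- The key "currying" chain identity for `deltaR`. -/
lemma chain (l : h → M → M) (r : M → h → M) (br : h → h → h)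
    (hlM : ∀ u x y, l u (x + y) = l u x + l u y)
    (hrH : ∀ x u u', r x (u + u') = r x u + r x u')
    (hbr2 : ∀ u x y, br u (x + y) = br u x + br u y)
    (m : ℕ) (G : (Fin (m + 1) → h) → M)
    (cG : (Fin m → h) → (h →+ M))
    (hcG : ∀ w v, cG w v = G (Fin.snoc w v))
    (w : Fin (m + 1) → h) (v : h) :
    deltaR l r br (m + 1) G (Fin.snoc w v)
      = deltaR (Lp l br hlM hbr2) (Rp l r br hlM hrH hbr2) br m cG w v := by
  set T1 := ∑ i : Fin m, ((-1:ℤ)^(i:ℕ)) •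
      l (w i.castSucc) (G (Fin.snoc (w ∘ (i.castSucc).succAbove) v)) with hT1
  set T2 := ((-1:ℤ)^m) • l (w (Fin.last m)) (G (Fin.snoc (w ∘ Fin.castSucc) v)) with hT2
  set T3 := ((-1:ℤ)^m) • r (G (Fin.snoc (w ∘ Fin.castSucc) (w (Fin.last m)))) v with hT3
  set T4 := ∑ i : Fin m, ((-1:ℤ)^((i:ℕ)+1)) •
      G (Fin.snoc (w ∘ (i.castSucc).succAbove) (br (w i.castSucc) v)) with hT4
  set T5 := ((-1:ℤ)^(m+1)) • G (Fin.snoc (w ∘ Fin.castSucc) (br (w (Fin.last m)) v)) with hT5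
  set T6 := ∑ i : Fin (m+1), ∑ j : Fin (m+1),
      (if hij : (i:ℕ) < (j:ℕ) then ((-1:ℤ)^((i:ℕ)+1)) •
        G (Fin.snoc (Function.update (w ∘ i.succAbove)
            ⟨(j:ℕ)-1, by have := j.isLt; omega⟩ (br (w i) (w j))) v) else 0) with hT6
  have lhs_eq : deltaR l r br (m + 1) G (Fin.snoc w v) = T1 + T2 + T3 + (T4 + T5 + T6) := by
    have e1 : (∑ i : Fin (m+1), ((-1:ℤ)^(i:ℕ)) •
          l ((Fin.snoc w v : Fin (m+2) → h) i.castSucc)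
            (G ((Fin.snoc w v : Fin (m+2) → h) ∘ (i.castSucc).succAbove)))
        = T1 + T2 := by
      rw [Fin.sum_univ_castSucc]
      congr 1
      · refine Finset.sum_congr rfl fun i _ => ?_
        rw [snoc_comp_succAbove, Fin.snoc_castSucc]
        simp only [Fin.coe_castSucc]
      · rw [snoc_comp_succAbove, Fin.succAbove_last, Fin.snoc_castSucc, Fin.val_last]
    have e2 : ((-1:ℤ)^(m+1+1)) •
          r (G fun i : Fin (m+1) => (Fin.snoc w v : Fin (m+2) → h) i.castSucc)
            ((Fin.snoc w v : Fin (m+2) → h) (Fin.last (m+1)))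
        = T3 := by
      have hw : (fun i : Fin (m+1) => (Fin.snoc w v : Fin (m+2) → h) i.castSucc) = w := by
        funext i; exact Fin.snoc_castSucc ..
      rw [hw, Fin.snoc_last, hT3, snoc_init', pow_succ, pow_succ, mul_neg_one, mul_neg_one,
        neg_neg]
    have e3 : (∑ i : Fin (m+2), ∑ j : Fin (m+2),
          if _hij : (i:ℕ) < (j:ℕ) then ((-1:ℤ)^((i:ℕ)+1)) •
            G (Function.update ((Fin.snoc w v : Fin (m+2) → h) ∘ i.succAbove)
                ⟨(j:ℕ)-1, by have := j.isLt; omega⟩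
                (br ((Fin.snoc w v : Fin (m+2) → h) i) ((Fin.snoc w v : Fin (m+2) → h) j)))
          else 0)
        = T4 + T5 + T6 := by
      rw [sum_split_aux]
      have hcorner : (if _hij : ((Fin.last (m+1) : Fin (m+2)):ℕ) < ((Fin.last (m+1) : Fin (m+2)):ℕ)
          then ((-1:ℤ)^(((Fin.last (m+1) : Fin (m+2)):ℕ)+1)) •
            G (Function.update ((Fin.snoc w v : Fin (m+2) → h) ∘ (Fin.last (m+1)).succAbove)
                ⟨((Fin.last (m+1) : Fin (m+2)):ℕ)-1, by omega⟩
                (br ((Fin.snoc w v : Fin (m+2) → h) (Fin.last (m+1)))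
                   ((Fin.snoc w v : Fin (m+2) → h) (Fin.last (m+1)))))
          else 0) = 0 := dif_neg (lt_irrefl _)
      have hrow : (∑ j : Fin (m+1),
          if _hij : ((Fin.last (m+1) : Fin (m+2)):ℕ) < ((j.castSucc : Fin (m+2)):ℕ)
          then ((-1:ℤ)^(((Fin.last (m+1) : Fin (m+2)):ℕ)+1)) •
            G (Function.update ((Fin.snoc w v : Fin (m+2) → h) ∘ (Fin.last (m+1)).succAbove)
                ⟨((j.castSucc : Fin (m+2)):ℕ)-1, by have := j.castSucc.isLt; omega⟩
                (br ((Fin.snoc w v : Fin (m+2) → h) (Fin.last (m+1)))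
                   ((Fin.snoc w v : Fin (m+2) → h) j.castSucc)))
          else 0) = 0 := Finset.sum_eq_zero fun j _ =>
        dif_neg (by simp only [Fin.val_last, Fin.coe_castSucc]; omega)
      have hcol : (∑ i : Fin (m+1),
          if _hij : ((i.castSucc : Fin (m+2)):ℕ) < ((Fin.last (m+1) : Fin (m+2)):ℕ)
          then ((-1:ℤ)^(((i.castSucc : Fin (m+2)):ℕ)+1)) •
            G (Function.update ((Fin.snoc w v : Fin (m+2) → h) ∘ (i.castSucc).succAbove)
                ⟨((Fin.last (m+1) : Fin (m+2)):ℕ)-1, by omega⟩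
                (br ((Fin.snoc w v : Fin (m+2) → h) i.castSucc)
                   ((Fin.snoc w v : Fin (m+2) → h) (Fin.last (m+1)))))
          else 0) = T4 + T5 := by
        have hterm : ∀ i : Fin (m+1),
            (if _hij : ((i.castSucc : Fin (m+2)):ℕ) < ((Fin.last (m+1) : Fin (m+2)):ℕ)
            then ((-1:ℤ)^(((i.castSucc : Fin (m+2)):ℕ)+1)) •
              G (Function.update ((Fin.snoc w v : Fin (m+2) → h) ∘ (i.castSucc).succAbove)
                  ⟨((Fin.last (m+1) : Fin (m+2)):ℕ)-1, by omega⟩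
                  (br ((Fin.snoc w v : Fin (m+2) → h) i.castSucc)
                     ((Fin.snoc w v : Fin (m+2) → h) (Fin.last (m+1)))))
            else 0)
            = ((-1:ℤ)^((i:ℕ)+1)) • G (Fin.snoc (w ∘ i.succAbove) (br (w i) v)) := by
          intro i
          rw [dif_pos (by simp only [Fin.val_last, Fin.coe_castSucc]; omega)]
          rw [snoc_comp_succAbove, update_snoc_mk_last _ _ _ _ _ (by simp)]
          simp only [Fin.snoc_castSucc, Fin.snoc_last, Fin.coe_castSucc]
        rw [Finset.sum_congr rfl fun i _ => hterm i, Fin.sum_univ_castSucc]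
        rw [hT4, hT5]
        simp only [Fin.coe_castSucc, Fin.val_last, Fin.succAbove_last]
      have hmain : (∑ i : Fin (m+1), ∑ j : Fin (m+1),
          if _hij : ((i.castSucc : Fin (m+2)):ℕ) < ((j.castSucc : Fin (m+2)):ℕ)
          then ((-1:ℤ)^(((i.castSucc : Fin (m+2)):ℕ)+1)) •
            G (Function.update ((Fin.snoc w v : Fin (m+2) → h) ∘ (i.castSucc).succAbove)
                ⟨((j.castSucc : Fin (m+2)):ℕ)-1, by have := j.castSucc.isLt; omega⟩
                (br ((Fin.snoc w v : Fin (m+2) → h) i.castSucc)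
                   ((Fin.snoc w v : Fin (m+2) → h) j.castSucc)))
          else 0) = T6 := by
        rw [hT6]
        refine Finset.sum_congr rfl fun i _ => Finset.sum_congr rfl fun j _ => ?_
        by_cases hij : (i:ℕ) < (j:ℕ)
        · rw [dif_pos (by simpa only [Fin.coe_castSucc] using hij), dif_pos hij]
          rw [snoc_comp_succAbove,
            update_snoc_mk_castSucc _ _ _ _ _ (by simp only [Fin.coe_castSucc]; omega)]
          simp only [Fin.snoc_castSucc, Fin.coe_castSucc]
        · rw [dif_neg (by simpa only [Fin.coe_castSucc] using hij), dif_neg hij]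
      rw [hcorner, hrow, hcol, hmain]
      abel
    show _ + _ + _ = _
    rw [e1, e2, e3]
  have rhs_eq : deltaR (Lp l br hlM hbr2) (Rp l r br hlM hrH hbr2) br m cG w v
      = (T1 + T4) + (T5 + T2 + T3) + T6 := by
    have hco : (fun i : Fin m => w i.castSucc) = w ∘ Fin.castSucc := rfl
    simp only [deltaR, AddMonoidHom.add_apply, AddMonoidHom.finset_sum_apply,
      AddMonoidHom.smul_apply, Lp, Rp, AddMonoidHom.mk'_apply, hcG,
      apply_dite (fun (φ : h →+ M) => φ v), AddMonoidHom.zero_apply]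
    rw [hco, hT1, hT2, hT3, hT4, hT5, hT6, ← Finset.sum_add_distrib]
    congr 1
    congr 1
    · refine Finset.sum_congr rfl fun i _ => ?_
      rw [pow_succ, mul_neg_one, neg_smul, smul_sub, sub_eq_add_neg]
    · rw [pow_succ, mul_neg_one, neg_smul, smul_sub, smul_sub]
      module
  rw [lhs_eq, rhs_eq]; abel

/-- The generic squaring-to-zero theorem. -/
theorem generic (n : ℕ) : ∀ (M : Type (max uh uv)) (_ : AddCommGroup M)
    (l : h → M → M) (r : M → h → M) (br : h → h → h)
    (_hlM : ∀ u x y, l u (x + y) = l u x + l u y)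
    (_hlH : ∀ u u' x, l (u + u') x = l u x + l u' x)
    (_hrM : ∀ x y u, r (x + y) u = r x u + r y u)
    (_hrH : ∀ x u u', r x (u + u') = r x u + r x u')
    (_hbr1 : ∀ u u' w, br (u + u') w = br u w + br u' w)
    (_hbr2 : ∀ u x y, br u (x + y) = br u x + br u y)
    (_leib : ∀ x y z, br x (br y z) = br (br x y) z + br y (br x z))
    (_A : ∀ x y mm, l x (l y mm) = l (br x y) mm + l y (l x mm))
    (_B : ∀ x y mm, l x (r mm y) = r (l x mm) y + r mm (br x y))
    (_C : ∀ x y mm, r mm (br x y) = r (r mm x) y + l x (r mm y))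
    (f : (Fin n → h) → M)
    (_hf : ∀ (u : Fin n → h) (i : Fin n) (x y : h),
      f (Function.update u i (x + y))
        = f (Function.update u i x) + f (Function.update u i y))
    (u : Fin (n + 2) → h),
    deltaR l r br (n + 1) (deltaR l r br n f) u = 0 := by
  induction n with
  | zero =>
    intro M instM l r br hlM hlH hrM hrH hbr1 hbr2 leib A B C f hf u
    have hln : ∀ a x, l a (-x) = -(l a x) := fun a x =>
      map_neg (AddMonoidHom.mk' (l a) (hlM a)) x
    have hrn : ∀ x a, r (-x) a = -(r x a) := fun x a =>
      map_neg (AddMonoidHom.mk' (fun z => r z a) (fun z z' => hrM z z' a)) x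
    have hfX : ∀ X : Fin 0 → h, f X = f (fun i : Fin 0 => i.elim0) := fun X => by
      rw [show X = (fun i : Fin 0 => i.elim0) from funext fun i => i.elim0]
    set F := deltaR l r br 0 f with hF
    have hd0 : ∀ a : Fin 1 → h, F a
        = -(r (f (fun i : Fin 0 => i.elim0)) (a (Fin.last 0))) := by
      intro a
      rw [hF]
      simp [deltaR, hfX]
    simp only [deltaR, hd0]
    simp [Fin.sum_univ_succ, Function.comp, hln, hrn]
    rw [C (u 0) (u 1) (f fun i => i.elim0)]
    abel
  | succ n IH =>
    intro M instM l r br hlM hlH hrM hrH hbr1 hbr2 leib A B C f hf u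
    have hlsub : ∀ a x y, l a (x - y) = l a x - l a y := fun a x y =>
      map_sub (AddMonoidHom.mk' (l a) (hlM a)) x y
    have hrsub : ∀ x y a, r (x - y) a = r x a - r y a := fun x y a =>
      map_sub (AddMonoidHom.mk' (fun z => r z a) (fun z z' => hrM z z' a)) x y
    have hupd : ∀ (ww : Fin n → h) (a b : h),
        f (Fin.snoc ww (a + b)) = f (Fin.snoc ww a) + f (Fin.snoc ww b) := by
      intro ww a b
      have h1 : ∀ x : h, (Fin.snoc ww x : Fin (n+1) → h)
          = Function.update (Fin.snoc ww a : Fin (n+1) → h) (Fin.last n) x := by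
        intro x; rw [update_snoc_last]
      rw [h1 (a + b), hf, ← h1 a, ← h1 b]
    set cf : (Fin n → h) → (h →+ M) :=
      fun ww => AddMonoidHom.mk' (fun x => f (Fin.snoc ww x)) (hupd ww) with hcf
    have hcfapp : ∀ ww x, cf ww x = f (Fin.snoc ww x) := fun ww x => rfl
    set l' := Lp l br hlM hbr2 with hl'
    set r' := Rp l r br hlM hrH hbr2 with hr'
    have hl'app : ∀ a φ x, l' a φ x = l a (φ x) - φ (br a x) := fun a φ x => rfl
    have hr'app : ∀ φ a x, r' φ a x = φ (br a x) - l a (φ x) - r (φ a) x :=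
      fun φ a x => rfl
    have hlM' : ∀ a φ ψ, l' a (φ + ψ) = l' a φ + l' a ψ := by
      intro a φ ψ; ext x
      simp only [hl'app, AddMonoidHom.add_apply, hlM]
      abel
    have hlH' : ∀ a a' φ, l' (a + a') φ = l' a φ + l' a' φ := by
      intro a a' φ; ext x
      simp only [hl'app, AddMonoidHom.add_apply, hlH, hbr1, map_add]
      abel
    have hrM' : ∀ φ ψ a, r' (φ + ψ) a = r' φ a + r' ψ a := by
      intro φ ψ a; ext x
      simp only [hr'app, AddMonoidHom.add_apply, hlM, hrM]
      abel
    have hrH' : ∀ φ a a', r' φ (a + a') = r' φ a + r' φ a' := by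
      intro φ a a'; ext x
      simp only [hr'app, AddMonoidHom.add_apply, hlH, hrM, hbr1, map_add]
      abel
    have hA' : ∀ a b φ, l' a (l' b φ) = l' (br a b) φ + l' b (l' a φ) := by
      intro a b φ; ext x
      simp only [hl'app, AddMonoidHom.add_apply]
      rw [hlsub a (l b (φ x)) (φ (br b x)), hlsub b (l a (φ x)) (φ (br a x)),
        leib a b x, map_add φ, A a b (φ x)]
      abel
    have hB' : ∀ a b φ, l' a (r' φ b) = r' (l' a φ) b + r' φ (br a b) := by
      intro a b φ; ext x
      simp only [hl'app, hr'app, AddMonoidHom.add_apply]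
      rw [hlsub a (φ (br b x) - l b (φ x)) (r (φ b) x),
        hlsub a (φ (br b x)) (l b (φ x)),
        hlsub b (l a (φ x)) (φ (br a x)),
        hrsub (l a (φ b)) (φ (br a b)) x,
        leib a b x, map_add φ, A a b (φ x), B a x (φ b)]
      abel
    have hC' : ∀ a b φ, r' φ (br a b) = r' (r' φ a) b + l' a (r' φ b) := by
      intro a b φ; ext x
      simp only [hl'app, hr'app, AddMonoidHom.add_apply]
      rw [hlsub b (φ (br a x) - l a (φ x)) (r (φ a) x),
        hlsub b (φ (br a x)) (l a (φ x)),
        hrsub (φ (br a b) - l a (φ b)) (r (φ a) b) x,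
        hrsub (φ (br a b)) (l a (φ b)) x,
        hlsub a (φ (br b x) - l b (φ x)) (r (φ b) x),
        hlsub a (φ (br b x)) (l b (φ x)),
        leib a b x, map_add φ, A a b (φ x), B a x (φ b), C b x (φ a)]
      abel
    have hf' : ∀ (ww : Fin n → h) (i : Fin n) (x y : h),
        cf (Function.update ww i (x + y))
          = cf (Function.update ww i x) + cf (Function.update ww i y) := by
      intro ww i x y; ext z
      show f (Fin.snoc (Function.update ww i (x + y)) z)
          = f (Fin.snoc (Function.update ww i x) z) + f (Fin.snoc (Function.update ww i y) z)
      rw [Fin.snoc_update, Fin.snoc_update, Fin.snoc_update, hf]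
    have IHres := IH (h →+ M) inferInstance l' r' br hlM' hlH' hrM' hrH' hbr1 hbr2 leib
      hA' hB' hC' cf hf'
    have hc1 : ∀ (ww : Fin (n + 1) → h) (x : h),
        (deltaR l' r' br n cf ww) x = deltaR l r br (n + 1) f (Fin.snoc ww x) := by
      intro ww x
      rw [hl', hr']
      exact (chain l r br hlM hrH hbr2 n f cf hcfapp ww x).symm
    obtain ⟨w', x, rfl⟩ : ∃ w' x, u = Fin.snoc w' x :=
      ⟨Fin.init u, u (Fin.last _), (Fin.snoc_init_self u).symm⟩
    rw [chain l r br hlM hrH hbr2 (n + 1) (deltaR l r br (n + 1) f)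
        (deltaR l' r' br n cf) hc1 w' x, ← hl', ← hr', IHres w']
    rfl

end Generic

section Equivariance

/-- `deltaR` is compatible with additive equivalences of coefficients. -/
lemma deltaR_equiv {h M N : Type*} [AddCommGroup M] [AddCommGroup N] (e : M ≃+ N)
    (lM : h → M → M) (lN : h → N → N) (hl : ∀ a x, lN a (e x) = e (lM a x))
    (rM : M → h → M) (rN : N → h → N) (hr : ∀ x a, rN (e x) a = e (rM x a))
    (br : h → h → h) (n : ℕ)
    (fM : (Fin n → h) → M) (fN : (Fin n → h) → N) (hf : ∀ w, fN w = e (fM w))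
    (u : Fin (n + 1) → h) :
    deltaR lN rN br n fN u = e (deltaR lM rM br n fM u) := by
  simp only [deltaR, hf, hl, hr, map_add, map_sum, map_zsmul]
  congr 1
  refine Finset.sum_congr rfl fun i _ => Finset.sum_congr rfl fun j _ => ?_
  split
  · rw [map_zsmul]
  · rw [map_zero]

end Equivariance

section GenericPrime

universe uh uv

/-- Universe-flexible version of `generic`, obtained by transporting along `ULift`. -/
theorem generic' {h : Type uh} {g : Type uv} [AddCommGroup h] [AddCommGroup g]
    (l : h → g → g) (r : g → h → g) (br : h → h → h)
    (hlM : ∀ a x y, l a (x + y) = l a x + l a y)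
    (hlH : ∀ a a' x, l (a + a') x = l a x + l a' x)
    (hrM : ∀ x y a, r (x + y) a = r x a + r y a)
    (hrH : ∀ x a a', r x (a + a') = r x a + r x a')
    (hbr1 : ∀ a a' b, br (a + a') b = br a b + br a' b)
    (hbr2 : ∀ a b b', br a (b + b') = br a b + br a b')
    (leib : ∀ x y z, br x (br y z) = br (br x y) z + br y (br x z))
    (A : ∀ x y mm, l x (l y mm) = l (br x y) mm + l y (l x mm))
    (B : ∀ x y mm, l x (r mm y) = r (l x mm) y + r mm (br x y))
    (C : ∀ x y mm, r mm (br x y) = r (r mm x) y + l x (r mm y))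
    (n : ℕ) (f : (Fin n → h) → g)
    (hf : ∀ (u : Fin n → h) (i : Fin n) (x y : h),
      f (Function.update u i (x + y))
        = f (Function.update u i x) + f (Function.update u i y))
    (u : Fin (n + 2) → h) :
    deltaR l r br (n + 1) (deltaR l r br n f) u = 0 := by
  set eqv : ULift.{uh} g ≃+ g := AddEquiv.ulift with heqv
  set lU : h → ULift.{uh} g → ULift.{uh} g := fun a x => eqv.symm (l a (eqv x)) with hlU
  set rU : ULift.{uh} g → h → ULift.{uh} g := fun x a => eqv.symm (r (eqv x) a) with hrU
  set fU : (Fin n → h) → ULift.{uh} g := fun w => eqv.symm (f w) with hfU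
  have key := generic (h := h) n (ULift.{uh} g) inferInstance lU rU br
    (by intro a x y; simp only [hlU]; rw [map_add, hlM, map_add])
    (by intro a a' x; simp only [hlU]; rw [hlH, map_add])
    (by intro x y a; simp only [hrU]; rw [map_add, hrM, map_add])
    (by intro x a a'; simp only [hrU]; rw [hrH, map_add])
    hbr1 hbr2 leib
    (by intro a b x
        simp only [hlU, AddEquiv.apply_symm_apply]
        rw [A a b (eqv x), map_add])
    (by intro a b x
        simp only [hlU, hrU, AddEquiv.apply_symm_apply]
        rw [B a b (eqv x), map_add])
    (by intro a b x
        simp only [hlU, hrU, AddEquiv.apply_symm_apply]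
        rw [C a b (eqv x), map_add])
    fU
    (by intro w i x y; simp only [hfU]; rw [hf, map_add])
    u
  have t1 : ∀ w : Fin (n + 1) → h, deltaR l r br n f w = eqv (deltaR lU rU br n fU w) := by
    intro w
    refine deltaR_equiv eqv lU l ?_ rU r ?_ br n fU f ?_ w
    · intro a x; simp only [hlU, AddEquiv.apply_symm_apply]
    · intro x a; simp only [hrU, AddEquiv.apply_symm_apply]
    · intro w'; simp only [hfU, AddEquiv.apply_symm_apply]
  have t2 : deltaR l r br (n + 1) (deltaR l r br n f) u
      = eqv (deltaR lU rU br (n + 1) (deltaR lU rU br n fU) u) := by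
    refine deltaR_equiv eqv lU l ?_ rU r ?_ br (n + 1) _ _ ?_ u
    · intro a x; simp only [hlU, AddEquiv.apply_symm_apply]
    · intro x a; simp only [hrU, AddEquiv.apply_symm_apply]
    · exact t1
  rw [t2, key, map_zero]

end GenericPrime

/-- For a deformation map `r` in a proto-twilled Leibniz algebra, the coboundary
operator `δ_r` of `r` squares to zero on multilinear cochains. -/
theorem deformation_map_coboundary_squares_to_zero
    (K : Type*) [Field K] (g h : Type*)
    [AddCommGroup g] [Module K g] [AddCommGroup h] [Module K h]
    (bg : g →ₗ[K] g →ₗ[K] g) (θ : g →ₗ[K] g →ₗ[K] h)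
    (bh : h →ₗ[K] h →ₗ[K] h) (η : h →ₗ[K] h →ₗ[K] g)
    (ψR : g →ₗ[K] h →ₗ[K] g) (ρL : g →ₗ[K] h →ₗ[K] h)
    (ψL : h →ₗ[K] g →ₗ[K] g) (ρR : h →ₗ[K] g →ₗ[K] h)
    (BG : g × h → g × h → g × h)
    (hBG : ∀ (x y : g) (u v : h),
      BG (x, u) (y, v) = (bg x y + ψR x v + ψL u y + η u v,
                          bh u v + ρL x v + ρR u y + θ x y))
    (leibG : ∀ a b c : g × h, BG a (BG b c) = BG (BG a b) c + BG b (BG a c))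
    (r : h →ₗ[K] g)
    (hr : ∀ u v : h,
      bg (r u) (r v) + ψR (r u) v + ψL u (r v) + η u v
        = r (bh u v + ρL (r u) v + ρR u (r v) + θ (r u) (r v)))
    (br : h → h → h)
    (hbr : ∀ u v : h, br u v = bh u v + ρL (r u) v + ρR u (r v) + θ (r u) (r v))
    (ψLr : h → g → g)
    (hψLr : ∀ (u : h) (x : g),
      ψLr u x = ψL u x + bg (r u) x - r (ρR u x + θ (r u) x))
    (ψRr : g → h → g)
    (hψRr : ∀ (x : g) (u : h),
      ψRr x u = ψR x u + bg x (r u) - r (ρL x u + θ x (r u))) :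
    ∀ (n : ℕ), 1 ≤ n → ∀ (f : MultilinearMap K (fun _ : Fin n => h) g)
      (u : Fin (n + 2) → h),
      deltaR ψLr ψRr br (n + 1) (deltaR ψLr ψRr br n ⇑f) u = 0 := by
  -- additivity of the components
  have hψLadd2 : ∀ (a : h) (x y : g), ψLr a (x + y) = ψLr a x + ψLr a y := by
    intro a x y; simp only [hψLr, map_add, LinearMap.add_apply]; abel
  have hψLadd1 : ∀ (a a' : h) (x : g), ψLr (a + a') x = ψLr a x + ψLr a' x := by
    intro a a' x; simp only [hψLr, map_add, LinearMap.add_apply]; abel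
  have hψRadd1 : ∀ (x y : g) (a : h), ψRr (x + y) a = ψRr x a + ψRr y a := by
    intro x y a; simp only [hψRr, map_add, LinearMap.add_apply]; abel
  have hψRadd2 : ∀ (x : g) (a a' : h), ψRr x (a + a') = ψRr x a + ψRr x a' := by
    intro x a a'; simp only [hψRr, map_add, LinearMap.add_apply]; abel
  have hbradd1 : ∀ (a a' b : h), br (a + a') b = br a b + br a' b := by
    intro a a' b; simp only [hbr, map_add, LinearMap.add_apply]; abel
  have hbradd2 : ∀ (a b b' : h), br a (b + b') = br a b + br a b' := by
    intro a b b'; simp only [hbr, map_add, LinearMap.add_apply]; abel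
  -- additivity of the big bracket
  have BGadd1 : ∀ a b c : g × h, BG (a + b) c = BG a c + BG b c := by
    rintro ⟨a1, a2⟩ ⟨b1, b2⟩ ⟨c1, c2⟩
    show BG (a1 + b1, a2 + b2) (c1, c2) = _
    rw [hBG, hBG, hBG, Prod.mk_add_mk, Prod.mk.injEq]
    constructor <;> · simp only [map_add, LinearMap.add_apply]; abel
  have BGadd2 : ∀ a b c : g × h, BG a (b + c) = BG a b + BG a c := by
    rintro ⟨a1, a2⟩ ⟨b1, b2⟩ ⟨c1, c2⟩
    show BG (a1, a2) (b1 + c1, b2 + c2) = _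
    rw [hBG, hBG, hBG, Prod.mk_add_mk, Prod.mk.injEq]
    constructor <;> · simp only [map_add, LinearMap.add_apply]; abel
  have BGsub1 : ∀ (x y z : g × h), BG (x - y) z = BG x z - BG y z := fun x y z =>
    map_sub (AddMonoidHom.mk' (fun t => BG t z) (fun p q => BGadd1 p q z)) x y
  have BGsub2 : ∀ (z x y : g × h), BG z (x - y) = BG z x - BG z y := fun z x y =>
    map_sub (AddMonoidHom.mk' (BG z) (fun p q => BGadd2 z p q)) x y
  -- the square-zero identity
  have hsq : ∀ a b c : g × h, BG (BG a b + BG b a) c = 0 := by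
    intro a b c
    have e1 : BG (BG a b) c = BG a (BG b c) - BG b (BG a c) :=
      eq_sub_of_add_eq (leibG a b c).symm
    have e2 : BG (BG b a) c = BG b (BG a c) - BG a (BG b c) :=
      eq_sub_of_add_eq (leibG b a c).symm
    rw [BGadd1, e1, e2]; abel
  -- graph and projection
  set jj : g → g × h := fun x => (x, 0) with hjj
  set pp : h → g × h := fun a => (r a, a) with hpp
  set prj : g × h → g := fun z => z.1 - r z.2 with hprj
  have hppadd : ∀ a b : h, pp (a + b) = pp a + pp b := by
    intro a b; simp only [hpp]; rw [Prod.mk_add_mk, map_add]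
  have hjjadd : ∀ x y : g, jj (x + y) = jj x + jj y := by
    intro x y; simp only [hjj]; rw [Prod.mk_add_mk, add_zero]
  have hπadd : ∀ z z' : g × h, prj (z + z') = prj z + prj z' := by
    intro z z'; simp only [hprj, Prod.fst_add, Prod.snd_add, map_add]; abel
  have hπsub : ∀ z z' : g × h, prj (z - z') = prj z - prj z' := by
    intro z z'; simp only [hprj, Prod.fst_sub, Prod.snd_sub, map_sub]; abel
  have hπj : ∀ x : g, prj (jj x) = x := by
    intro x; simp only [hprj, hjj, map_zero, sub_zero]
  have hπp : ∀ a : h, prj (pp a) = 0 := by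
    intro a; simp only [hprj, hpp, sub_self]
  -- multiplicativity of the graph
  have hppmul : ∀ a b : h, BG (pp a) (pp b) = pp (br a b) := by
    intro a b
    simp only [hpp]
    rw [hBG, hbr a b]
    exact Prod.ext_iff.mpr ⟨hr a b, rfl⟩
  -- structure of mixed products
  have hLj : ∀ (a : h) (x : g),
      BG (pp a) (jj x) = jj (ψLr a x) + pp (ρR a x + θ (r a) x) := by
    intro a x
    simp only [hpp, hjj]
    rw [hBG, Prod.mk_add_mk, Prod.mk.injEq]
    constructor
    · rw [hψLr]; simp only [map_zero, LinearMap.zero_apply, add_zero, zero_add]; abel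
    · simp only [map_zero, LinearMap.zero_apply, add_zero, zero_add]
  have hRj : ∀ (x : g) (a : h),
      BG (jj x) (pp a) = jj (ψRr x a) + pp (ρL x a + θ x (r a)) := by
    intro x a
    simp only [hpp, hjj]
    rw [hBG, Prod.mk_add_mk, Prod.mk.injEq]
    constructor
    · rw [hψRr]; simp only [map_zero, LinearMap.zero_apply, add_zero, zero_add]; abel
    · simp only [map_zero, LinearMap.zero_apply, add_zero, zero_add]
  have hπL : ∀ (a : h) (x : g), prj (BG (pp a) (jj x)) = ψLr a x := by
    intro a x; rw [hLj a x, hπadd, hπj, hπp, add_zero]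
  have hπR : ∀ (x : g) (a : h), prj (BG (jj x) (pp a)) = ψRr x a := by
    intro x a; rw [hRj x a, hπadd, hπj, hπp, add_zero]
  -- Leibniz identity for br
  have hbrleib : ∀ a b c : h, br a (br b c) = br (br a b) c + br b (br a c) := by
    intro a b c
    have e := leibG (pp a) (pp b) (pp c)
    simp only [hppmul] at e
    have e2 := congrArg Prod.snd e
    simpa only [hpp, Prod.snd_add] using e2
  -- axiom A
  have hAA : ∀ (a b : h) (x : g),
      ψLr a (ψLr b x) = ψLr (br a b) x + ψLr b (ψLr a x) := by
    intro a b x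
    have h1 : jj (ψLr b x) = BG (pp b) (jj x) - pp (ρR b x + θ (r b) x) :=
      eq_sub_of_add_eq (hLj b x).symm
    have e : BG (pp a) (jj (ψLr b x))
        = BG (pp (br a b)) (jj x) + BG (pp b) (jj (ψLr a x))
          + (pp (br b (ρR a x + θ (r a) x)) - pp (br a (ρR b x + θ (r b) x))) := by
      rw [h1, BGsub2, leibG (pp a) (pp b) (jj x), hppmul a b, hLj a x, BGadd2,
        hppmul b, hppmul a]
      abel
    rw [← hπL a (ψLr b x), e, hπadd, hπadd, hπsub, hπp, hπp, hπL, hπL]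
    abel
  -- axiom B
  have hBB : ∀ (a b : h) (x : g),
      ψLr a (ψRr x b) = ψRr (ψLr a x) b + ψRr x (br a b) := by
    intro a b x
    have h1 : jj (ψRr x b) = BG (jj x) (pp b) - pp (ρL x b + θ x (r b)) :=
      eq_sub_of_add_eq (hRj x b).symm
    have e : BG (pp a) (jj (ψRr x b))
        = BG (jj (ψLr a x)) (pp b) + BG (jj x) (pp (br a b))
          + (pp (br (ρR a x + θ (r a) x) b) - pp (br a (ρL x b + θ x (r b)))) := by
      rw [h1, BGsub2, leibG (pp a) (jj x) (pp b), hppmul a b, hLj a x, BGadd1,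
        hppmul _ b, hppmul a]
      abel
    rw [← hπL a (ψRr x b), e, hπadd, hπadd, hπsub, hπp, hπp, hπR, hπR]
    abel
  -- right action kills symmetrized products
  have hRz : ∀ (a : h) (x : g) (b : h), ψRr (ψLr a x + ψRr x a) b = 0 := by
    intro a x b
    have h1 : jj (ψLr a x) = BG (pp a) (jj x) - pp (ρR a x + θ (r a) x) :=
      eq_sub_of_add_eq (hLj a x).symm
    have h2 : jj (ψRr x a) = BG (jj x) (pp a) - pp (ρL x a + θ x (r a)) :=
      eq_sub_of_add_eq (hRj x a).symm
    have hj : jj (ψLr a x + ψRr x a)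
        = (BG (pp a) (jj x) + BG (jj x) (pp a))
          - (pp (ρR a x + θ (r a) x) + pp (ρL x a + θ x (r a))) := by
      rw [hjjadd, h1, h2]; abel
    rw [← hπR (ψLr a x + ψRr x a) b, hj, BGsub1, hsq, BGadd1, hppmul, hppmul,
      hπsub, hπadd, hπp, hπp]
    simp [hprj]
  -- axiom C
  have hCC : ∀ (a b : h) (x : g),
      ψRr x (br a b) = ψRr (ψRr x a) b + ψLr a (ψRr x b) := by
    intro a b x
    have hz := hRz a x b
    rw [hψRadd1] at hz
    rw [hBB a b x, ← add_assoc, show ψRr (ψRr x a) b + ψRr (ψLr a x) b = 0 from by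
      rw [add_comm]; exact hz, zero_add]
  -- transport to a common universe and apply the generic theorem
  intro n _hn f u
  exact generic' ψLr ψRr br hψLadd2 hψLadd1 hψRadd1 hψRadd2 hbradd1 hbradd2 hbrleib
    hAA hBB hCC n ⇑f (fun w i x y => f.map_update_add w i x y) u
end

section
/- Let K be a field of characteristic zero and (G = g ⊕ h, [·,·]_G) a proto-twilled Leibniz algebra over K with component maps [·,·]_g, θ, [·,·]_h, η, ψR, ρL, ψL, ρR, and associated bilinear maps μ, ν, θ̃, η̃ on G. Then for any linear map r : h → g with horizontal lift r̃ and all u,v ∈ h: (η̃ + ⟦ν,r̃⟧ + (1/2)⟦⟦μ,r̃⟧,r̃⟧ + (1/6)⟦⟦⟦θ̃,r̃⟧,r̃⟧,r̃⟧)((0,u),(0,v)) = (η(u,v) − r([u,v]_h) + ψR(r(u),v) + ψL(u,r(v)) + [r(u),r(v)]_g − r(ρL(r(u),v) + ρR(u,r(v))) − r(θ(r(u),r(v))), 0). Consequently, r is a deformation map if and only if this expression vanishes for all u,v ∈ h (i.e. r is a Maurer–Cartan element of the controlling curved L∞-algebra). -/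
/-- Balavoine bracket of a bilinear map `B` with a linear map `T`:
`⟦B,T⟧(w1,w2) = B(T w1, w2) + B(w1, T w2) − T(B(w1,w2))`. -/
def bbrkt {W : Type*} [AddCommGroup W] (B : W → W → W) (T : W → W) : W → W → W :=
  fun a b => B (T a) b + B a (T b) - T (B a b)

/-- In a proto-twilled Leibniz algebra `(G = g ⊕ h, [·,·]_G)` over a field of
characteristic zero, for any linear map `r : h → g` with horizontal lift `r̃`,
the expression `(η̃ + ⟦ν,r̃⟧ + (1/2)⟦⟦μ,r̃⟧,r̃⟧ + (1/6)⟦⟦⟦θ̃,r̃⟧,r̃⟧,r̃⟧)((0,u),(0,v))`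
equals the displayed element of `g ⊕ h`; consequently `r` is a deformation map
if and only if this expression vanishes for all `u, v ∈ h` (i.e. `r` is a
Maurer–Cartan element of the controlling curved L∞-algebra). -/
theorem deformation_map_iff_maurer_cartan
    (K : Type*) [Field K] [CharZero K] (g h : Type*)
    [AddCommGroup g] [Module K g] [AddCommGroup h] [Module K h]
    (bg : g →ₗ[K] g →ₗ[K] g) (θ : g →ₗ[K] g →ₗ[K] h)
    (bh : h →ₗ[K] h →ₗ[K] h) (η : h →ₗ[K] h →ₗ[K] g)
    (ψR : g →ₗ[K] h →ₗ[K] g) (ρL : g →ₗ[K] h →ₗ[K] h)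
    (ψL : h →ₗ[K] g →ₗ[K] g) (ρR : h →ₗ[K] g →ₗ[K] h)
    (BG : g × h → g × h → g × h)
    (hBG : ∀ (x y : g) (u v : h),
      BG (x, u) (y, v) = (bg x y + ψR x v + ψL u y + η u v,
                          bh u v + ρL x v + ρR u y + θ x y))
    (leibG : ∀ a b c : g × h, BG a (BG b c) = BG (BG a b) c + BG b (BG a c))
    (μ ν θt ηt : g × h → g × h → g × h)
    (hμ : ∀ p q : g × h, μ p q = (bg p.1 q.1, ρL p.1 q.2 + ρR p.2 q.1))
    (hν : ∀ p q : g × h, ν p q = (ψR p.1 q.2 + ψL p.2 q.1, bh p.2 q.2))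
    (hθt : ∀ p q : g × h, θt p q = (0, θ p.1 q.1))
    (hηt : ∀ p q : g × h, ηt p q = (η p.2 q.2, 0))
    (r : h →ₗ[K] g)
    (rt : g × h → g × h)
    (hrt : ∀ p : g × h, rt p = (r p.2, 0)) :
    (∀ u v : h,
      ηt (0, u) (0, v) + bbrkt ν rt (0, u) (0, v)
        + (2 : K)⁻¹ • bbrkt (bbrkt μ rt) rt (0, u) (0, v)
        + (6 : K)⁻¹ • bbrkt (bbrkt (bbrkt θt rt) rt) rt (0, u) (0, v)
      = (η u v - r (bh u v) + ψR (r u) v + ψL u (r v) + bg (r u) (r v)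
          - r (ρL (r u) v + ρR u (r v)) - r (θ (r u) (r v)), 0)) ∧
    ((∀ u v : h,
        bg (r u) (r v) + ψR (r u) v + ψL u (r v) + η u v
          = r (bh u v + ρL (r u) v + ρR u (r v) + θ (r u) (r v)))
      ↔ (∀ u v : h,
        ηt (0, u) (0, v) + bbrkt ν rt (0, u) (0, v)
          + (2 : K)⁻¹ • bbrkt (bbrkt μ rt) rt (0, u) (0, v)
          + (6 : K)⁻¹ • bbrkt (bbrkt (bbrkt θt rt) rt) rt (0, u) (0, v) = 0)) := by
  have key : ∀ u v : h,
      ηt (0, u) (0, v) + bbrkt ν rt (0, u) (0, v)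
        + (2 : K)⁻¹ • bbrkt (bbrkt μ rt) rt (0, u) (0, v)
        + (6 : K)⁻¹ • bbrkt (bbrkt (bbrkt θt rt) rt) rt (0, u) (0, v)
      = (η u v - r (bh u v) + ψR (r u) v + ψL u (r v) + bg (r u) (r v)
          - r (ρL (r u) v + ρR u (r v)) - r (θ (r u) (r v)), 0) := by
    intro u v
    simp only [bbrkt, hrt, hμ, hν, hθt, hηt, map_zero, LinearMap.zero_apply, map_add,
      Prod.fst, Prod.snd, Prod.mk_add_mk, Prod.mk_sub_mk, Prod.smul_mk, smul_zero,
      zero_add, add_zero, sub_zero, zero_sub]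
    rw [Prod.mk.injEq]
    refine ⟨?_, rfl⟩
    match_scalars <;> field_simp <;> ring
  refine ⟨key, ?_⟩
  have e : ∀ u v : h,
      η u v - r (bh u v) + ψR (r u) v + ψL u (r v) + bg (r u) (r v)
        - r (ρL (r u) v + ρR u (r v)) - r (θ (r u) (r v))
      = (bg (r u) (r v) + ψR (r u) v + ψL u (r v) + η u v)
        - r (bh u v + ρL (r u) v + ρR u (r v) + θ (r u) (r v)) := by
    intro u v
    simp only [map_add]
    abel
  constructor
  · intro H u v
    rw [key u v, e u v, Prod.ext_iff]
    exact ⟨by rw [Prod.fst_zero, sub_eq_zero, H u v], by rw [Prod.snd_zero]⟩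
  · intro H u v
    have h0 := H u v
    rw [key u v, Prod.ext_iff] at h0
    have h1 := h0.1
    rw [e u v, Prod.fst_zero] at h1
    exact sub_eq_zero.mp h1
end

section
/- Let K be a field of characteristic zero and (g,[·,·]_g) a Leibniz algebra over K. On G = g ⊕ g define the bilinear maps μ((x',x),(y',y)) = ([x',y']_g, [x',y]_g + [x,y']_g) and η̃((x',x),(y',y)) = ([x,y]_g, 0), and for a linear map r : g → g let r̃ : G → G be r̃(x',x) = (r(x),0). Then r is a modified Rota–Baxter operator on (g,[·,·]_g), i.e. [r(x),r(y)]_g = r([r(x),y]_g + [x,r(y)]_g) − [x,y]_g for all x,y ∈ g, if and only if η̃((0,x),(0,y)) + (1/2)⟦⟦μ,r̃⟧,r̃⟧((0,x),(0,y)) = 0 for all x,y ∈ g (i.e. r is a Maurer–Cartan element of the curved L∞-algebra controlling modified Rota–Baxter operators). -/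
/-- A linear map `r : g → g` on a Leibniz algebra `(g,[·,·]_g)` over a field of
characteristic zero is a modified Rota–Baxter operator if and only if it is a
Maurer–Cartan element of the controlling curved L∞-algebra, i.e.
`η̃((0,x),(0,y)) + (1/2)⟦⟦μ,r̃⟧,r̃⟧((0,x),(0,y)) = 0` for all `x, y ∈ g`. -/
theorem modified_rota_baxter_iff_maurer_cartan
    (K : Type*) [Field K] [CharZero K] (g : Type*) [AddCommGroup g] [Module K g]
    (bg : g →ₗ[K] g →ₗ[K] g)
    (leib : ∀ x y z : g, bg x (bg y z) = bg (bg x y) z + bg y (bg x z))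
    (μ ηt : g × g → g × g → g × g)
    (hμ : ∀ p q : g × g, μ p q = (bg p.1 q.1, bg p.1 q.2 + bg p.2 q.1))
    (hηt : ∀ p q : g × g, ηt p q = (bg p.2 q.2, 0))
    (r : g →ₗ[K] g)
    (rt : g × g → g × g)
    (hrt : ∀ p : g × g, rt p = (r p.2, 0)) :
    (∀ x y : g, bg (r x) (r y) = r (bg (r x) y + bg x (r y)) - bg x y)
      ↔ (∀ x y : g,
        ηt (0, x) (0, y) + (2 : K)⁻¹ • bbrkt (bbrkt μ rt) rt (0, x) (0, y) = 0) := by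
  have key : ∀ x y : g,
      ηt (0, x) (0, y) + (2 : K)⁻¹ • bbrkt (bbrkt μ rt) rt (0, x) (0, y)
        = (bg x y + (2:K)⁻¹ • ((2:K) • (bg (r x) (r y) - r (bg (r x) y + bg x (r y)))), 0) := by
    intro x y
    simp only [bbrkt, hμ, hηt, hrt, map_zero, map_add, map_sub, LinearMap.zero_apply,
      LinearMap.map_zero, Prod.mk.injEq, Prod.smul_mk, Prod.mk_add_mk, Prod.mk_sub_mk,
      Prod.fst_add, Prod.snd_add, Prod.fst_sub, Prod.snd_sub]
    constructor
    · module
    · module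
  constructor
  · intro h x y
    rw [key]
    have := h x y
    refine Prod.ext ?_ rfl
    simp only
    rw [this, smul_smul]
    norm_num
  · intro h x y
    have := key x y
    rw [h x y] at this
    have h1 : bg x y + (2:K)⁻¹ • ((2:K) • (bg (r x) (r y) - r (bg (r x) y + bg x (r y)))) = 0 := by
      have := congrArg Prod.fst this.symm
      simpa using this
    have h2 : (2:K)⁻¹ • ((2:K) • (bg (r x) (r y) - r (bg (r x) y + bg x (r y))))
        = bg (r x) (r y) - r (bg (r x) y + bg x (r y)) := by
      rw [smul_smul]; norm_num
    rw [h2] at h1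
    linear_combination (norm := abel) h1
end

section
/- Let K be a field of characteristic zero, (g,[·,·]_g) a Leibniz algebra over K, (V,ρL,ρR) a representation of it, and θ : g × g → V a bilinear Leibniz 2-cocycle, i.e. ρL(x,θ(y,z)) − ρL(y,θ(x,z)) − ρR(θ(x,y),z) − θ([x,y]_g,z) − θ(y,[x,z]_g) + θ(x,[y,z]_g) = 0 for all x,y,z ∈ g. On G = g ⊕ V define the bilinear maps μ((x,u),(y,v)) = ([x,y]_g, ρL(x,v) + ρR(u,y)) and θ̃((x,u),(y,v)) = (0, θ(x,y)), and for a linear map r : V → g let r̃ : G → G be r̃(x,u) = (r(u),0). Then r is a θ-twisted Rota–Baxter operator, i.e. [r(u),r(v)]_g = r(ρL(r(u),v) + ρR(u,r(v)) + θ(r(u),r(v))) for all u,v ∈ V, if and only if (1/2)⟦⟦μ,r̃⟧,r̃⟧((0,u),(0,v)) + (1/6)⟦⟦⟦θ̃,r̃⟧,r̃⟧,r̃⟧((0,u),(0,v)) = 0 for all u,v ∈ V (i.e. r is a Maurer–Cartan element of the L∞-algebra controlling θ-twisted Rota–Baxter operators). -/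
/-- Let `(g,[·,·]_g)` be a Leibniz algebra over a field of characteristic zero,
`(V,ρL,ρR)` a representation and `θ` a Leibniz 2-cocycle.  A linear map
`r : V → g` is a θ-twisted Rota–Baxter operator if and only if it is a
Maurer–Cartan element of the controlling L∞-algebra, i.e.
`(1/2)⟦⟦μ,r̃⟧,r̃⟧((0,u),(0,v)) + (1/6)⟦⟦⟦θ̃,r̃⟧,r̃⟧,r̃⟧((0,u),(0,v)) = 0`
for all `u, v ∈ V`. -/
theorem twisted_rota_baxter_iff_maurer_cartan
    (K : Type*) [Field K] [CharZero K] (g V : Type*)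
    [AddCommGroup g] [Module K g] [AddCommGroup V] [Module K V]
    (bg : g →ₗ[K] g →ₗ[K] g)
    (leib : ∀ x y z : g, bg x (bg y z) = bg (bg x y) z + bg y (bg x z))
    (ρL : g →ₗ[K] V →ₗ[K] V) (ρR : V →ₗ[K] g →ₗ[K] V)
    (rep1 : ∀ (x y : g) (v : V), ρL x (ρL y v) = ρL (bg x y) v + ρL y (ρL x v))
    (rep2 : ∀ (x y : g) (v : V), ρL x (ρR v y) = ρR (ρL x v) y + ρR v (bg x y))
    (rep3 : ∀ (x y : g) (v : V), ρR v (bg x y) = ρR (ρR v x) y + ρL x (ρR v y))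
    (θ : g →ₗ[K] g →ₗ[K] V)
    (cocycle : ∀ x y z : g,
      ρL x (θ y z) - ρL y (θ x z) - ρR (θ x y) z
        - θ (bg x y) z - θ y (bg x z) + θ x (bg y z) = 0)
    (μ θt : g × V → g × V → g × V)
    (hμ : ∀ p q : g × V, μ p q = (bg p.1 q.1, ρL p.1 q.2 + ρR p.2 q.1))
    (hθt : ∀ p q : g × V, θt p q = (0, θ p.1 q.1))
    (r : V →ₗ[K] g)
    (rt : g × V → g × V)
    (hrt : ∀ p : g × V, rt p = (r p.2, 0)) :
    (∀ u v : V, bg (r u) (r v) = r (ρL (r u) v + ρR u (r v) + θ (r u) (r v)))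
      ↔ (∀ u v : V,
        (2 : K)⁻¹ • bbrkt (bbrkt μ rt) rt (0, u) (0, v)
          + (6 : K)⁻¹ • bbrkt (bbrkt (bbrkt θt rt) rt) rt (0, u) (0, v) = 0) := by
  have key : ∀ u v : V,
      (2 : K)⁻¹ • bbrkt (bbrkt μ rt) rt (0, u) (0, v)
        + (6 : K)⁻¹ • bbrkt (bbrkt (bbrkt θt rt) rt) rt (0, u) (0, v)
      = (bg (r u) (r v) - r (ρL (r u) v + ρR u (r v) + θ (r u) (r v)), 0) := by
    intro u v
    simp only [bbrkt, hμ, hθt, hrt, map_zero, LinearMap.zero_apply, map_add, map_sub,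
      LinearMap.add_apply, LinearMap.sub_apply, Prod.fst, Prod.snd,
      Prod.mk_add_mk, Prod.mk_sub_mk, Prod.smul_mk, Prod.mk.injEq, smul_zero,
      add_zero, zero_add, sub_zero, zero_sub]
    constructor <;> first
    | trivial
    | (match_scalars <;> norm_num)
  constructor
  · intro h u v
    rw [key, Prod.mk.injEq] at *
    exact ⟨sub_eq_zero.mpr (h u v), rfl⟩
  · intro h u v
    have := (key u v).symm.trans (h u v)
    rw [Prod.mk.injEq] at this
    exact sub_eq_zero.mp this.1
end

section
/- Let K be a field of characteristic zero, g a Lie algebra over K and V a Lie module over g (with action (x,v) ↦ x • v). On G = g ⊕ V define the bilinear map μ_hemi((x,u),(y,v)) = (⁅x,y⁆, x • v), and for a linear map r : V → g let r̃ : G → G be r̃(x,u) = (r(u),0). Then r is an embedding tensor, i.e. ⁅r(u),r(v)⁆ = r(r(u) • v) for all u,v ∈ V, if and only if ⟦⟦μ_hemi,r̃⟧,r̃⟧((0,u),(0,v)) = 0 for all u,v ∈ V (i.e. r is a Maurer–Cartan element of the L∞-algebra controlling embedding tensors). -/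
/-- For a Lie algebra `g` over a field of characteristic zero and a Lie module
`V` over `g`, a linear map `r : V → g` is an embedding tensor if and only if it
is a Maurer–Cartan element of the controlling L∞-algebra, i.e.
`⟦⟦μ_hemi,r̃⟧,r̃⟧((0,u),(0,v)) = 0` for all `u, v ∈ V`. -/
theorem embedding_tensor_iff_maurer_cartan
    (K : Type*) [Field K] [CharZero K] (g : Type*) [LieRing g] [LieAlgebra K g]
    (V : Type*) [AddCommGroup V] [Module K V] [LieRingModule g V] [LieModule K g V]
    (μhemi : g × V → g × V → g × V)
    (hμhemi : ∀ p q : g × V, μhemi p q = (⁅p.1, q.1⁆, ⁅p.1, q.2⁆))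
    (r : V →ₗ[K] g)
    (rt : g × V → g × V)
    (hrt : ∀ p : g × V, rt p = (r p.2, 0)) :
    (∀ u v : V, ⁅r u, r v⁆ = r ⁅r u, v⁆)
      ↔ (∀ u v : V, bbrkt (bbrkt μhemi rt) rt (0, u) (0, v) = 0) := by
  have key : ∀ u v : V, bbrkt (bbrkt μhemi rt) rt (0, u) (0, v)
      = (⁅r u, r v⁆ - r ⁅r u, v⁆ + (⁅r u, r v⁆ - r ⁅r u, v⁆), 0) := by
    intro u v
    simp only [bbrkt, hμhemi, hrt]
    simp [Prod.ext_iff]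
    abel
  constructor
  · intro h u v
    simp [key, h]
  · intro h u v
    have hk := (key u v).symm.trans (h u v)
    have h2 : ⁅r u, r v⁆ - r ⁅r u, v⁆ + (⁅r u, r v⁆ - r ⁅r u, v⁆) = 0 :=
      congrArg Prod.fst hk
    have h2' : (2 : K) • (⁅r u, r v⁆ - r ⁅r u, v⁆) = 0 := by
      rw [two_smul]; exact h2
    have := smul_eq_zero.mp h2'
    rcases this with h3 | h3
    · exact absurd h3 two_ne_zero
    · exact sub_eq_zero.mp h3
end

section
/- Let K be a field of characteristic zero and (G = g ⊕ h, [·,·]_G) a proto-twilled Leibniz algebra over K with component maps [·,·]_g, θ, [·,·]_h, η, ψR, ρL, ψL, ρR, and associated bilinear maps μ, ν, θ̃ on G. Let r : h → g be a deformation map and r' : h → g any linear map, with horizontal lifts r̃ and r̃'. Then r + r' is a deformation map if and only if for all u,v ∈ h: (⟦ν,r̃'⟧ + ⟦⟦μ,r̃⟧,r̃'⟧ + (1/2)⟦⟦⟦θ̃,r̃⟧,r̃⟧,r̃'⟧ + (1/2)⟦⟦μ,r̃'⟧,r̃'⟧ + (1/2)⟦⟦⟦θ̃,r̃⟧,r̃'⟧,r̃'⟧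 + (1/6)⟦⟦⟦θ̃,r̃'⟧,r̃'⟧,r̃'⟧)((0,u),(0,v)) = 0; that is, r' is a Maurer–Cartan element of the governing L∞-algebra of r obtained by twisting the controlling algebra by r. -/
/-- Let `r : h → g` be a deformation map in a proto-twilled Leibniz algebra over
a field of characteristic zero, and let `r' : h → g` be any linear map.  Then
`r + r'` is a deformation map if and only if `r'` is a Maurer–Cartan element of
the governing L∞-algebra of `r` obtained by twisting the controlling algebra by
`r`, i.e. `(⟦ν,r̃'⟧ + ⟦⟦μ,r̃⟧,r̃'⟧ + (1/2)⟦⟦⟦θ̃,r̃⟧,r̃⟧,r̃'⟧ + (1/2)⟦⟦μ,r̃'⟧,r̃'⟧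
+ (1/2)⟦⟦⟦θ̃,r̃⟧,r̃'⟧,r̃'⟧ + (1/6)⟦⟦⟦θ̃,r̃'⟧,r̃'⟧,r̃'⟧)((0,u),(0,v)) = 0` for all
`u, v ∈ h`. -/
theorem sum_deformation_map_iff_maurer_cartan_twisted
    (K : Type*) [Field K] [CharZero K] (g h : Type*)
    [AddCommGroup g] [Module K g] [AddCommGroup h] [Module K h]
    (bg : g →ₗ[K] g →ₗ[K] g) (θ : g →ₗ[K] g →ₗ[K] h)
    (bh : h →ₗ[K] h →ₗ[K] h) (η : h →ₗ[K] h →ₗ[K] g)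
    (ψR : g →ₗ[K] h →ₗ[K] g) (ρL : g →ₗ[K] h →ₗ[K] h)
    (ψL : h →ₗ[K] g →ₗ[K] g) (ρR : h →ₗ[K] g →ₗ[K] h)
    (BG : g × h → g × h → g × h)
    (hBG : ∀ (x y : g) (u v : h),
      BG (x, u) (y, v) = (bg x y + ψR x v + ψL u y + η u v,
                          bh u v + ρL x v + ρR u y + θ x y))
    (leibG : ∀ a b c : g × h, BG a (BG b c) = BG (BG a b) c + BG b (BG a c))
    (μ ν θt : g × h → g × h → g × h)
    (hμ : ∀ p q : g × h, μ p q = (bg p.1 q.1, ρL p.1 q.2 + ρR p.2 q.1))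
    (hν : ∀ p q : g × h, ν p q = (ψR p.1 q.2 + ψL p.2 q.1, bh p.2 q.2))
    (hθt : ∀ p q : g × h, θt p q = (0, θ p.1 q.1))
    (r : h →ₗ[K] g)
    (hr : ∀ u v : h,
      bg (r u) (r v) + ψR (r u) v + ψL u (r v) + η u v
        = r (bh u v + ρL (r u) v + ρR u (r v) + θ (r u) (r v)))
    (r' : h →ₗ[K] g)
    (rt rt' : g × h → g × h)
    (hrt : ∀ p : g × h, rt p = (r p.2, 0))
    (hrt' : ∀ p : g × h, rt' p = (r' p.2, 0)) :
    (∀ u v : h,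
      bg ((r + r') u) ((r + r') v) + ψR ((r + r') u) v + ψL u ((r + r') v) + η u v
        = (r + r') (bh u v + ρL ((r + r') u) v + ρR u ((r + r') v)
            + θ ((r + r') u) ((r + r') v)))
      ↔ (∀ u v : h,
        bbrkt ν rt' (0, u) (0, v)
          + bbrkt (bbrkt μ rt) rt' (0, u) (0, v)
          + (2 : K)⁻¹ • bbrkt (bbrkt (bbrkt θt rt) rt) rt' (0, u) (0, v)
          + (2 : K)⁻¹ • bbrkt (bbrkt μ rt') rt' (0, u) (0, v)
          + (2 : K)⁻¹ • bbrkt (bbrkt (bbrkt θt rt) rt') rt' (0, u) (0, v)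
          + (6 : K)⁻¹ • bbrkt (bbrkt (bbrkt θt rt') rt') rt' (0, u) (0, v) = 0) :=  by
  have key : ∀ u v : h,
      bbrkt ν rt' (0, u) (0, v)
          + bbrkt (bbrkt μ rt) rt' (0, u) (0, v)
          + (2 : K)⁻¹ • bbrkt (bbrkt (bbrkt θt rt) rt) rt' (0, u) (0, v)
          + (2 : K)⁻¹ • bbrkt (bbrkt μ rt') rt' (0, u) (0, v)
          + (2 : K)⁻¹ • bbrkt (bbrkt (bbrkt θt rt) rt') rt' (0, u) (0, v)
          + (6 : K)⁻¹ • bbrkt (bbrkt (bbrkt θt rt') rt') rt' (0, u) (0, v)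
        = ((bg ((r + r') u) ((r + r') v) + ψR ((r + r') u) v + ψL u ((r + r') v) + η u v)
            - (r + r') (bh u v + ρL ((r + r') u) v + ρR u ((r + r') v)
                + θ ((r + r') u) ((r + r') v)), (0 : h)) := by
    intro u v
    simp only [bbrkt, hμ, hν, hθt, hrt, hrt', map_zero, map_add, LinearMap.add_apply,
      LinearMap.zero_apply, Prod.mk_add_mk, Prod.mk_sub_mk, Prod.smul_mk, Prod.fst_add,
      Prod.snd_add, zero_add, add_zero, sub_zero, zero_sub, map_sub, map_neg, neg_zero]
    refine Prod.ext ?_ ?_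
    · dsimp only
      have hrx := hr u v
      simp only [map_add] at hrx
      linear_combination (norm := module) -hrx
    · dsimp only
      module
  constructor
  · intro H u v
    rw [key u v, H u v]
    simp
  · intro H u v
    have h1 := (key u v).symm.trans (H u v)
    have h2 : (bg ((r + r') u) ((r + r') v) + ψR ((r + r') u) v + ψL u ((r + r') v) + η u v)
        - (r + r') (bh u v + ρL ((r + r') u) v + ρR u ((r + r') v)
            + θ ((r + r') u) ((r + r') v)) = 0 := congrArg Prod.fst h1
    exact sub_eq_zero.mp h2
end
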